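/- Let G̃ be a connected finite combinatorial graph with boundary and let G be a connected nontrivial subgraph of G̃, also viewed as a combinatorial graph with boundary. Suppose the inclusion map from G to G̃ induces an isomorphism of fundamental groups of G and G̃. Then σ_i(G̃) ≤ σ_i(G) for every i = 1, 2, …, |B(G)|. -/

import Mathlib

/-
Common definitions for Steklov eigenvalues on weighted finite graphs with boundary,
following Yu-Yu, "Monotonicity of Steklov eigenvalues on graphs and applications".
-/

attribute [local instance] Classical.propDecidable

noncomputable section

/-- The boundary inner product `⟨u,v⟩_A = ∑_{x ∈ A} u x * v x * m x`. -/
def bInner {V : Type*} [Fintype V] (A : Set V) (m : V → ℝ) (u v : V → ℝ) : ℝ :=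
  ∑ x : V, if x ∈ A then u x * v x * m x else 0

/-- Total measure `m(A) = ∑_{x ∈ A} m x`. -/
def mTotal {V : Type*} [Fintype V] (A : Set V) (m : V → ℝ) : ℝ :=
  ∑ x : V, if x ∈ A then m x else 0

/-- The Dirichlet energy `⟨du,du⟩_G = ∑_{{x,y} ∈ E(G)} w x y * (u y - u x)^2`
(each edge counted once; the double sum counts each edge twice, whence the `/2`). -/
def energy {V : Type*} [Fintype V] (G : SimpleGraph V) (w : V → V → ℝ) (u : V → ℝ) : ℝ :=
  (∑ x : V, ∑ y : V, if G.Adj x y then w x y * (u y - u x) ^ 2 else 0) / 2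

/-- The weighted graph Laplacian `Δ_G f (x) = (1/m x) ∑_{y ∼ x} w x y * (f y - f x)`. -/
def lap {V : Type*} [Fintype V] (G : SimpleGraph V) (m : V → ℝ) (w : V → V → ℝ)
    (f : V → ℝ) (x : V) : ℝ :=
  (∑ y : V, if G.Adj x y then w x y * (f y - f x) else 0) / m x

/-- The `i`-th Steklov eigenvalue (1-indexed, listed with multiplicity) of the weighted
graph `(G,B,m,w)` with boundary, via the Courant min-max characterization: the infimum
over `i`-dimensional spaces of functions (injecting into `ℝ^B` by restriction) of the
maximal Rayleigh quotient `⟨du,du⟩_G / ⟨u,u⟩_B`. -/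
def steklov {V : Type*} [Fintype V] (G : SimpleGraph V) (B : Set V) (m : V → ℝ)
    (w : V → V → ℝ) (i : ℕ) : ℝ :=
  sInf {σ : ℝ | ∃ E : Submodule ℝ (V → ℝ), Module.finrank ℝ E = i ∧
    (∀ u ∈ E, (∀ x ∈ B, u x = 0) → u = 0) ∧
    ∀ u ∈ E, energy G w u ≤ σ * bInner B m u u}

/-- `f` is a Steklov eigenfunction of `(G,B,m,w)` for the eigenvalue `σ`:
`f ≠ 0`, `Δ_G f = 0` on the interior, and `∂f/∂n = σ f` on `B`. -/
def IsSteklovEigenfun {V : Type*} [Fintype V] (G : SimpleGraph V) (B : Set V) (m : V → ℝ)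
    (w : V → V → ℝ) (σ : ℝ) (f : V → ℝ) : Prop :=
  f ≠ 0 ∧ (∀ x, x ∉ B → lap G m w f x = 0) ∧ ∀ x ∈ B, -lap G m w f x = σ * f x

/-- `f` is a Steklov eigenfunction with vanishing Dirichlet boundary data on `Z`,
for the eigenvalue `lam`. -/
def IsDirSteklovEigenfun {V : Type*} [Fintype V] (G : SimpleGraph V) (B Z : Set V)
    (m : V → ℝ) (w : V → V → ℝ) (lam : ℝ) (f : V → ℝ) : Prop :=
  f ≠ 0 ∧ (∀ x ∈ Z, f x = 0) ∧ (∀ x, x ∉ B → x ∉ Z → lap G m w f x = 0) ∧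
    ∀ x ∈ B, -lap G m w f x = lam * f x

/-- The first Steklov eigenvalue with vanishing Dirichlet boundary data on `Z`:
`λ₁(G,B,Z) = inf { ⟨du,du⟩_G / ⟨u,u⟩_B : u|_B ≢ 0, u|_Z ≡ 0 }`. -/
def lambda1 {V : Type*} [Fintype V] (G : SimpleGraph V) (B Z : Set V) (m : V → ℝ)
    (w : V → V → ℝ) : ℝ :=
  sInf {c : ℝ | ∃ u : V → ℝ, (∀ x ∈ Z, u x = 0) ∧ (∃ x ∈ B, u x ≠ 0) ∧
    c = energy G w u / bInner B m u u}

/-- The statement `λ₁(G,B,Z) ≥ c` (with the convention `λ₁ = +∞` when `B = ∅`):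
every `u` vanishing on `Z` satisfies `c * ⟨u,u⟩_B ≤ ⟨du,du⟩_G`. -/
def lambda1Ge {V : Type*} [Fintype V] (G : SimpleGraph V) (B Z : Set V) (m : V → ℝ)
    (w : V → V → ℝ) (c : ℝ) : Prop :=
  ∀ u : V → ℝ, (∀ x ∈ Z, u x = 0) → c * bInner B m u u ≤ energy G w u

/-- The intrinsic boundary of a combinatorial graph: vertices of degree at most one. -/
def combBoundary {V : Type*} (G : SimpleGraph V) : Set V :=
  {v | (G.neighborSet v).ncard ≤ 1}

/-- The tooth `G̃_x`: vertices of `G̃` reachable from `x` after deleting all edges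
of the subgraph `H`. -/
def tooth {V : Type*} (Gt : SimpleGraph V) (H : Gt.Subgraph) (x : V) : Set V :=
  {y | (Gt.deleteEdges H.edgeSet).Reachable x y}

/-- The tooth `G̃_x` as a graph in its own right. -/
def toothGraph {V : Type*} (Gt : SimpleGraph V) (H : Gt.Subgraph) (x : V) :
    SimpleGraph (tooth Gt H x) :=
  (Gt.deleteEdges H.edgeSet).induce (tooth Gt H x)

/-- `G̃` is a comb over its subgraph `H`: after deleting the edges of `H`, the graph
breaks into exactly `|V(H)|` connected components, one for each vertex of `H`. -/
def IsComb {V : Type*} (Gt : SimpleGraph V) (H : Gt.Subgraph) : Prop :=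
  Function.Bijective fun x : H.verts =>
    (Gt.deleteEdges H.edgeSet).connectedComponentMk (x : V)

/-- The `i`-th Steklov eigenvalue of the subgraph `H` of `(G̃,m,w)` with boundary `B`,
with the restricted vertex measure and edge weight. -/
def steklovSub {V : Type*} [Fintype V] (Gt : SimpleGraph V) (H : Gt.Subgraph) (B : Set V)
    (m : V → ℝ) (w : V → V → ℝ) (i : ℕ) : ℝ :=
  steklov H.coe (Subtype.val ⁻¹' B) (fun x => m x.1) (fun x y => w x.1 y.1) i

/-- The set `Z` of interior vertices of the subgraph `(H,B)` at which every function
that is harmonic in the interior and satisfies `⟨f,1⟩_B = 0` vanishes. -/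
def Zset {V : Type*} [Fintype V] (Gt : SimpleGraph V) (H : Gt.Subgraph) (B : Set V)
    (m : V → ℝ) (w : V → V → ℝ) : Set H.verts :=
  {x | (x : V) ∉ B ∧ ∀ f : H.verts → ℝ,
    (∀ y : H.verts, (y : V) ∉ B → lap H.coe (fun a => m a.1) (fun a b => w a.1 b.1) f y = 0) →
    bInner (Subtype.val ⁻¹' B) (fun a => m a.1) f (fun _ => 1) = 0 → f x = 0}

/-- The set `Z₁` of vertices of the subgraph `(H,B)` at which every Steklov
eigenfunction for `σ₂` vanishes. -/
def Z1set {V : Type*} [Fintype V] (Gt : SimpleGraph V) (H : Gt.Subgraph) (B : Set V)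
    (m : V → ℝ) (w : V → V → ℝ) : Set H.verts :=
  {x | ∀ f : H.verts → ℝ,
    IsSteklovEigenfun H.coe (Subtype.val ⁻¹' B) (fun a => m a.1) (fun a b => w a.1 b.1)
      (steklovSub Gt H B m w 2) f → f x = 0}

/-- Vertex type of the wedge sum `∨_z^r Γ` of `r` copies of `Γ` at `z`:
`r` copies of `V ∖ {z}` together with one common copy of `z` (the `Sum.inr` vertex). -/
abbrev wedgeV (V : Type*) (z : V) (r : ℕ) : Type _ := ({x : V // x ≠ z} × Fin r) ⊕ Unit

/-- The wedge sum `∨_z^r Γ` of `r` copies of the graph `Γ` at the vertex `z`. -/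
def wedgeGraph {V : Type*} (Γ : SimpleGraph V) (z : V) (r : ℕ) :
    SimpleGraph (wedgeV V z r) :=
  SimpleGraph.fromRel fun a b =>
    match a, b with
    | Sum.inl (x, i), Sum.inl (y, j) => i = j ∧ Γ.Adj x.1 y.1
    | Sum.inr _, Sum.inl (y, _) => Γ.Adj z y.1
    | _, _ => False

/-- The vertex measure on `∨_z^r Γ` inherited from `m`. -/
def wedgeM {V : Type*} (m : V → ℝ) (z : V) (r : ℕ) : wedgeV V z r → ℝ :=
  fun a => match a with
  | Sum.inl (x, _) => m x.1
  | Sum.inr _ => m z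

/-- The edge weight on `∨_z^r Γ` inherited from `w`. -/
def wedgeW {V : Type*} (w : V → V → ℝ) (z : V) (r : ℕ) :
    wedgeV V z r → wedgeV V z r → ℝ :=
  fun a b => match a, b with
  | Sum.inl (x, _), Sum.inl (y, _) => w x.1 y.1
  | Sum.inl (x, _), Sum.inr _ => w x.1 z
  | Sum.inr _, Sum.inl (y, _) => w z y.1
  | Sum.inr _, Sum.inr _ => 0

/-- The boundary `⊔^r B` of the wedge sum `∨_z^r Γ` (for `B` not containing `z`). -/
def wedgeB {V : Type*} (B : Set V) (z : V) (r : ℕ) : Set (wedgeV V z r) :=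
  {a | match a with
      | Sum.inl (x, _) => x.1 ∈ B
      | Sum.inr _ => False}

/-- Vertex type of the star `St(l₀,…,l_{r-1})`: the vertex `Sum.inl ⟨j,k⟩` is the vertex
on the `j`-th arm at distance `k+1` from the center, and `Sum.inr ()` is the center. -/
abbrev starV {r : ℕ} (l : Fin r → ℕ) : Type := (Σ j : Fin r, Fin (l j)) ⊕ Unit

/-- The star `St(l₀,…,l_{r-1})`: `r` paths of lengths `l₀,…,l_{r-1}` identified at one
end vertex (the center `Sum.inr ()`). -/
def starGraph {r : ℕ} (l : Fin r → ℕ) : SimpleGraph (starV l) :=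
  SimpleGraph.fromRel fun a b =>
    match a, b with
    | Sum.inl ⟨j, k⟩, Sum.inl ⟨j', k'⟩ => j = j' ∧ k.1 + 1 = k'.1
    | Sum.inr _, Sum.inl ⟨_, k⟩ => k.1 = 0
    | _, _ => False

/-- The vertex on the `j`-th arm of the star at distance `d` from the center
(the center itself when `d = 0`). -/
def starVertexAt {r : ℕ} (l : Fin r → ℕ) (j : Fin r) (d : ℕ) : starV l :=
  if h : 0 < d ∧ d - 1 < l j then Sum.inl ⟨j, ⟨d - 1, h.2⟩⟩ else Sum.inr ()

/-- The regular comb `Comb(r;l)`: a base path `(0,0) ∼ (1,0) ∼ ⋯ ∼ (r,0)` of length `r`,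
with a tooth `(k,0) ∼ (k,1) ∼ ⋯ ∼ (k,l)` of length `l` attached at each base vertex. -/
def combGraph (r l : ℕ) : SimpleGraph (Fin (r + 1) × Fin (l + 1)) :=
  SimpleGraph.fromRel fun a b =>
    (a.2.1 = 0 ∧ b.2.1 = 0 ∧ a.1.1 + 1 = b.1.1) ∨ (a.1 = b.1 ∧ a.2.1 + 1 = b.2.1)

end

section YuYuAuxiliary

attribute [local instance] Classical.propDecidable

open SimpleGraph

private lemma bInner_nonneg' {W : Type*} [Fintype W] (B : Set W) (u : W → ℝ) :
    0 ≤ bInner B (fun _ => 1) u u := by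
  apply Finset.sum_nonneg
  intro x _
  split
  · show (0:ℝ) ≤ u x * u x * 1
    nlinarith [mul_self_nonneg (u x)]
  · exact le_refl 0

private lemma energy_nonneg' {W : Type*} [Fintype W] (G : SimpleGraph W) (u : W → ℝ) :
    0 ≤ energy G (fun _ _ => 1) u := by
  apply div_nonneg _ (by norm_num)
  apply Finset.sum_nonneg
  intro x _
  apply Finset.sum_nonneg
  intro y _
  split
  · positivity
  · exact le_refl 0

private lemma bInner_eq_sum {W : Type*} [Fintype W] (B : Set W) (f : W → ℝ) :
    bInner B (fun _ => 1) f f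
      = ∑ x ∈ Finset.univ.filter (fun x => x ∈ B), f x * f x := by
  rw [Finset.sum_filter]
  unfold bInner
  exact Finset.sum_congr rfl fun x _ => by by_cases hx : x ∈ B <;> simp [hx]

private lemma steklov_mem_nonneg {W : Type*} [Fintype W] (G : SimpleGraph W) (B : Set W)
    {i : ℕ} (hi : 1 ≤ i) {σ : ℝ}
    (hσ : ∃ E : Submodule ℝ (W → ℝ), Module.finrank ℝ E = i ∧
        (∀ u ∈ E, (∀ x ∈ B, u x = 0) → u = 0) ∧
        ∀ u ∈ E, energy G (fun _ _ => 1) u ≤ σ * bInner B (fun _ => 1) u u) :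
    0 ≤ σ := by
  obtain ⟨E, hrank, hvan, hray⟩ := hσ
  have hpos : 0 < Module.finrank ℝ E := by rw [hrank]; omega
  obtain ⟨⟨u, huE⟩, hune⟩ := Module.finrank_pos_iff_exists_ne_zero.mp hpos
  have hu0 : u ≠ 0 := fun h => hune (Subtype.ext h)
  by_contra hneg
  push_neg at hneg
  have hb := bInner_nonneg' B u
  rcases eq_or_lt_of_le hb with hb0 | hbpos
  · apply hu0
    apply hvan u huE
    intro x hx
    have hterms := (Finset.sum_eq_zero_iff_of_nonneg (fun y (_ : y ∈ Finset.univ) => by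
      show (0:ℝ) ≤ if y ∈ B then u y * u y * 1 else 0
      split
      · nlinarith [mul_self_nonneg (u y)]
      · exact le_refl 0)).mp hb0.symm
    have hx' := hterms x (Finset.mem_univ x)
    rw [if_pos hx, mul_one] at hx'
    exact mul_self_eq_zero.mp hx'
  · have h1 := hray u huE
    have h2 : σ * bInner B (fun _ => 1) u u < 0 := mul_neg_of_neg_of_pos hneg hbpos
    exact absurd (le_trans (energy_nonneg' G u) h1) (not_le.mpr h2)

private lemma steklov_set_nonempty {W : Type*} [Fintype W] (G : SimpleGraph W) (B : Set W)
    {i : ℕ} (hi : i ≤ B.ncard) :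
    ∃ σ : ℝ, ∃ E : Submodule ℝ (W → ℝ), Module.finrank ℝ E = i ∧
        (∀ u ∈ E, (∀ x ∈ B, u x = 0) → u = 0) ∧
        ∀ u ∈ E, energy G (fun _ _ => 1) u ≤ σ * bInner B (fun _ => 1) u u := by
  classical
  have hcard : i ≤ B.toFinset.card := by rwa [← Set.ncard_eq_toFinset_card']
  obtain ⟨s, hsB, hscard⟩ := Finset.exists_subset_card_eq hcard
  have hsB' : ∀ x ∈ s, x ∈ B := fun x hx => Set.mem_toFinset.mp (hsB hx)
  set g : {x // x ∈ s} → (W → ℝ) := fun j => Pi.single j.1 1 with hg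
  have hLI : LinearIndependent ℝ g := by
    have h2 := (Pi.basisFun ℝ W).linearIndependent.comp
      (Subtype.val : {x // x ∈ s} → W) Subtype.val_injective
    have hgg : g = fun j : {x // x ∈ s} => (Pi.basisFun ℝ W) j.1 := by
      funext j
      rw [hg, Pi.basisFun_apply]
    rw [hgg]
    exact h2
  have hsupp : ∀ u ∈ Submodule.span ℝ (Set.range g), ∀ x, x ∉ s → u x = 0 := by
    intro u hu
    have hle : Submodule.span ℝ (Set.range g) ≤
        { carrier := {u : W → ℝ | ∀ x, x ∉ s → u x = 0},
          add_mem' := fun ha hb x hx => by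
            simp only [Pi.add_apply, ha x hx, hb x hx, add_zero],
          zero_mem' := fun x hx => rfl,
          smul_mem' := fun c a ha x hx => by
            simp only [Pi.smul_apply, ha x hx, smul_eq_mul, mul_zero] } := by
      rw [Submodule.span_le]
      rintro _ ⟨j, rfl⟩ x hx
      have hne : x ≠ j.1 := fun h => hx (h ▸ j.2)
      simp only [hg]
      exact Pi.single_eq_of_ne hne 1
    exact hle hu
  refine ⟨2 * (Fintype.card W : ℝ), Submodule.span ℝ (Set.range g), ?_, ?_, ?_⟩
  · rw [finrank_span_eq_card hLI, Fintype.card_coe, hscard]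
  · intro u hu hvan
    funext x
    by_cases hx : x ∈ s
    · exact hvan x (hsB' x hx)
    · exact hsupp u hu x hx
  · intro u hu
    have hbi : bInner B (fun _ => 1) u u = ∑ x : W, u x * u x := by
      unfold bInner
      apply Finset.sum_congr rfl
      intro x _
      by_cases hx : x ∈ B
      · rw [if_pos hx, mul_one]
      · rw [if_neg hx, hsupp u hu x (fun hxs => hx (hsB' x hxs))]
        simp
    have hterm : ∀ x y : W, (if G.Adj x y then (1:ℝ) * (u y - u x) ^ 2 else 0)
        ≤ 2 * (u x * u x) + 2 * (u y * u y) := by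
      intro x y
      split
      · nlinarith [sq_nonneg (u y + u x)]
      · nlinarith [mul_self_nonneg (u x), mul_self_nonneg (u y)]
    have hsum : ∑ x : W, ∑ y : W, (if G.Adj x y then (1:ℝ) * (u y - u x) ^ 2 else 0)
        ≤ ∑ x : W, ∑ y : W, (2 * (u x * u x) + 2 * (u y * u y)) :=
      Finset.sum_le_sum fun x _ => Finset.sum_le_sum fun y _ => hterm x y
    have hrhs : ∑ x : W, ∑ y : W, (2 * (u x * u x) + 2 * (u y * u y))
        = 4 * (Fintype.card W : ℝ) * ∑ x : W, u x * u x := by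
      have h1 : ∀ x : W, ∑ y : W, (2 * (u x * u x) + 2 * (u y * u y))
          = (Fintype.card W : ℝ) * (2 * (u x * u x)) + 2 * ∑ y : W, u y * u y := by
        intro x
        rw [Finset.sum_add_distrib, Finset.sum_const, Finset.card_univ, nsmul_eq_mul,
          ← Finset.mul_sum]
      rw [Finset.sum_congr rfl fun x _ => h1 x, Finset.sum_add_distrib, Finset.sum_const,
        Finset.card_univ, nsmul_eq_mul]
      simp only [← Finset.mul_sum]
      ring
    unfold energy
    rw [hbi]
    have := le_trans hsum (le_of_eq hrhs)
    linarith

private lemma walk_in_H {V : Type*} {Gt : SimpleGraph V} {H : Gt.Subgraph}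
    {a b : ↥H.verts} (p : H.coe.Walk a b) :
    ∃ q : Gt.Walk a.1 b.1, ∀ f ∈ q.edges, f ∈ H.edgeSet := by
  induction p with
  | nil => exact ⟨SimpleGraph.Walk.nil, by simp⟩
  | cons h p ih =>
    obtain ⟨q, hq⟩ := ih
    refine ⟨SimpleGraph.Walk.cons (H.adj_sub h) q, ?_⟩
    intro f hf
    rw [SimpleGraph.Walk.edges_cons, List.mem_cons] at hf
    rcases hf with rfl | hf
    · exact SimpleGraph.Subgraph.mem_edgeSet.mpr h
    · exact hq f hf

private lemma bridge_of_not_H {V : Type*} {Gt : SimpleGraph V} {H : Gt.Subgraph}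
    (hpi1 : ∀ (v : V) (c : Gt.Walk v v), c.IsCycle → ∀ e ∈ c.edges, e ∈ H.edgeSet)
    {a b : V} (hadj : Gt.Adj a b) (hne : s(a, b) ∉ H.edgeSet) : Gt.IsBridge s(a, b) := by
  refine (SimpleGraph.isBridge_iff_adj_and_forall_cycle_notMem hadj).mpr ?_
  intro u p hp hmem
  exact hne (hpi1 u p hp _ hmem)

private lemma unique_vert {V : Type*} {Gt : SimpleGraph V} {H : Gt.Subgraph}
    (hG : H.coe.Connected)
    (hpi1 : ∀ (v : V) (c : Gt.Walk v v), c.IsCycle → ∀ e ∈ c.edges, e ∈ H.edgeSet)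
    {x y : V} (hx : x ∈ H.verts) (hy : y ∈ H.verts)
    (h : (Gt.deleteEdges H.edgeSet).Reachable x y) : x = y := by
  by_contra hne
  obtain ⟨p, hp, -⟩ := h.exists_path_of_dist
  cases p with
  | nil => exact hne rfl
  | @cons _ v _ hadj q =>
    have hGtadj : Gt.Adj x v := (SimpleGraph.deleteEdges_adj.mp hadj).1
    have hnotH : s(x, v) ∉ H.edgeSet := (SimpleGraph.deleteEdges_adj.mp hadj).2
    have hbridge := bridge_of_not_H hpi1 hGtadj hnotH
    rw [SimpleGraph.isBridge_iff] at hbridge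
    apply hbridge
    rw [SimpleGraph.reachable_delete_edges_iff_exists_walk]
    obtain ⟨pH⟩ := hG.preconnected ⟨x, hx⟩ ⟨y, hy⟩
    obtain ⟨w1, hw1⟩ := walk_in_H pH
    have hqe : s(x, v) ∉ q.edges := by
      have hnd := hp.edges_nodup
      rw [SimpleGraph.Walk.edges_cons] at hnd
      exact (List.nodup_cons.mp hnd).1
    refine ⟨w1.append (q.reverse.mapLe (SimpleGraph.deleteEdges_le H.edgeSet)), ?_⟩
    rw [SimpleGraph.Walk.edges_append, List.mem_append]
    rintro (hmem | hmem)
    · exact hnotH (hw1 _ hmem)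
    · apply hqe
      simp only [SimpleGraph.Walk.mapLe, SimpleGraph.Walk.edges_map, List.mem_map,
        SimpleGraph.Hom.ofLE_apply, Sym2.map_id', id,
        SimpleGraph.Walk.edges_reverse, List.mem_reverse] at hmem
      obtain ⟨e, he, rfl⟩ := hmem
      exact he

private lemma Gd_acyclic {V : Type*} {Gt : SimpleGraph V} {H : Gt.Subgraph}
    (hpi1 : ∀ (v : V) (c : Gt.Walk v v), c.IsCycle → ∀ e ∈ c.edges, e ∈ H.edgeSet) :
    (Gt.deleteEdges H.edgeSet).IsAcyclic := by
  intro v c hc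
  have hc' : (c.mapLe (SimpleGraph.deleteEdges_le H.edgeSet)).IsCycle := hc.mapLe _
  obtain ⟨e, he⟩ : ∃ e, e ∈ c.edges := by
    have h3 := hc.three_le_length
    have hne : c.edges ≠ [] := by
      intro h
      have hl := SimpleGraph.Walk.length_edges c
      rw [h] at hl
      simp at hl
      omega
    exact List.exists_mem_of_ne_nil _ hne
  have heGd := SimpleGraph.Walk.edges_subset_edgeSet c he
  rw [SimpleGraph.edgeSet_deleteEdges] at heGd
  apply heGd.2
  apply hpi1 v _ hc' e
  simp only [SimpleGraph.Walk.mapLe, SimpleGraph.Walk.edges_map, List.mem_map]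
  refine ⟨e, he, ?_⟩
  induction e using Sym2.ind with
  | _ a b => simp [SimpleGraph.Hom.ofLE_apply]

private lemma exists_rho_aux {V : Type*} {Gt : SimpleGraph V} {H : Gt.Subgraph}
    {a b : V} (w : Gt.Walk a b) :
    b ∈ H.verts → ∃ x : ↥H.verts, (Gt.deleteEdges H.edgeSet).Reachable a x.1 := by
  induction w with
  | nil =>
    intro hb
    exact ⟨⟨_, hb⟩, SimpleGraph.Reachable.refl _⟩
  | @cons a c b hadj p ih =>
    intro hb
    by_cases hH : s(a, c) ∈ H.edgeSet
    · exact ⟨⟨a, H.edge_vert hH⟩, SimpleGraph.Reachable.refl _⟩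
    · obtain ⟨x, hx⟩ := ih hb
      exact ⟨x, (SimpleGraph.deleteEdges_adj.mpr ⟨hadj, hH⟩).reachable.trans hx⟩

private lemma exists_rho {V : Type*} {Gt : SimpleGraph V} {H : Gt.Subgraph}
    (hGt : Gt.Connected) (hnt : H.verts.Nontrivial) (v : V) :
    ∃ x : ↥H.verts, (Gt.deleteEdges H.edgeSet).Reachable v x.1 := by
  obtain ⟨x0, hx0, -⟩ := hnt
  obtain ⟨w⟩ := hGt.preconnected v x0
  exact exists_rho_aux w hx0

private lemma exists_boundary_tooth {V : Type*} [Fintype V] {Gt : SimpleGraph V}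
    {H : Gt.Subgraph} (hG : H.coe.Connected)
    (hpi1 : ∀ (v : V) (c : Gt.Walk v v), c.IsCycle → ∀ e ∈ c.edges, e ∈ H.edgeSet)
    (x : ↥H.verts) :
    ∃ b : V, (Gt.deleteEdges H.edgeSet).Reachable x.1 b ∧
      ((H.coe.neighborSet x).ncard ≤ 1 → (Gt.neighborSet b).ncard ≤ 1) := by
  classical
  by_cases hz : ∃ z, (Gt.deleteEdges H.edgeSet).Adj x.1 z
  · obtain ⟨z0, hz0⟩ := hz
    obtain ⟨y, hyT, hymax⟩ := Finset.exists_max_image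
      (Finset.univ.filter fun v => (Gt.deleteEdges H.edgeSet).Reachable x.1 v)
      (fun v => (Gt.deleteEdges H.edgeSet).dist x.1 v)
      ⟨x.1, Finset.mem_filter.mpr ⟨Finset.mem_univ _, SimpleGraph.Reachable.refl _⟩⟩
    rw [Finset.mem_filter] at hyT
    have hreach : (Gt.deleteEdges H.edgeSet).Reachable x.1 y := hyT.2
    have hmax : ∀ z, (Gt.deleteEdges H.edgeSet).Reachable x.1 z →
        (Gt.deleteEdges H.edgeSet).dist x.1 z ≤ (Gt.deleteEdges H.edgeSet).dist x.1 y := by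
      intro z hzr
      exact hymax z (Finset.mem_filter.mpr ⟨Finset.mem_univ _, hzr⟩)
    have hd1 : 1 ≤ (Gt.deleteEdges H.edgeSet).dist x.1 y :=
      le_trans (hz0.reachable.pos_dist_of_ne hz0.ne) (hmax z0 hz0.reachable)
    have hyx : y ≠ x.1 := by
      intro h
      rw [h, SimpleGraph.dist_self] at hd1
      omega
    have hyH : y ∉ H.verts := fun hyv => hyx (unique_vert hG hpi1 hyv x.2 hreach.symm)
    obtain ⟨p, hp, hplen⟩ := hreach.exists_path_of_dist
    have key : ∀ z, (Gt.deleteEdges H.edgeSet).Adj y z →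
        ∃ (q : (Gt.deleteEdges H.edgeSet).Walk x.1 z)
          (h : (Gt.deleteEdges H.edgeSet).Adj z y), p = q.concat h := by
      intro z hyz
      have hzr : (Gt.deleteEdges H.edgeSet).Reachable x.1 z := hreach.trans hyz.reachable
      obtain ⟨q, hq, hqlen⟩ := hzr.exists_path_of_dist
      have hysupp : y ∉ q.support := by
        intro hmem
        obtain ⟨q1, q2, hq12⟩ := SimpleGraph.Walk.mem_support_iff_exists_append.mp hmem
        have h1 : (Gt.deleteEdges H.edgeSet).dist x.1 y ≤ q1.length :=
          SimpleGraph.dist_le q1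
        have h2 : q2.length ≠ 0 := fun h0 =>
          hyz.ne (SimpleGraph.Walk.eq_of_length_eq_zero h0)
        have h3 : q.length = q1.length + q2.length := by
          rw [hq12, SimpleGraph.Walk.length_append]
        have h4 := hmax z hzr
        omega
      have hq' : (q.concat hyz.symm).IsPath := by
        rw [SimpleGraph.Walk.isPath_def, SimpleGraph.Walk.support_concat,
          List.nodup_append]
        refine ⟨hq.support_nodup, List.nodup_singleton y, ?_⟩
        intro a ha b hb
        rw [List.mem_singleton] at hb
        subst hb
        exact fun h => hysupp (h ▸ ha)
      have hpath_eq : (⟨p, hp⟩ : (Gt.deleteEdges H.edgeSet).Path x.1 y)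
          = ⟨q.concat hyz.symm, hq'⟩ := (Gd_acyclic hpi1).path_unique _ _
      exact ⟨q, hyz.symm, congrArg Subtype.val hpath_eq⟩
    have hss : ((Gt.deleteEdges H.edgeSet).neighborSet y).Subsingleton := by
      intro z1 h1 z2 h2
      obtain ⟨q1, e1, hq1⟩ := key z1 h1
      obtain ⟨q2, e2, hq2⟩ := key z2 h2
      have heq : q1.concat e1 = q2.concat e2 := by rw [← hq1, ← hq2]
      obtain ⟨hv, -⟩ := SimpleGraph.Walk.concat_inj heq
      exact hv
    refine ⟨y, hreach, fun _ => ?_⟩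
    have hset : Gt.neighborSet y = (Gt.deleteEdges H.edgeSet).neighborSet y := by
      ext z
      simp only [SimpleGraph.mem_neighborSet, SimpleGraph.deleteEdges_adj]
      constructor
      · intro hadj
        exact ⟨hadj, fun hm => hyH (H.edge_vert hm)⟩
      · exact fun h => h.1
    rw [hset]
    exact (Set.ncard_le_one (Set.toFinite _)).mpr fun a ha b hb => hss ha hb
  · push_neg at hz
    refine ⟨x.1, SimpleGraph.Reachable.refl _, ?_⟩
    intro hx
    have hset : Gt.neighborSet x.1 = Subtype.val '' (H.coe.neighborSet x) := by
      ext z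
      simp only [SimpleGraph.mem_neighborSet, Set.mem_image]
      constructor
      · intro hadj
        have hH : H.Adj x.1 z := by
          by_contra hne
          exact hz z (SimpleGraph.deleteEdges_adj.mpr ⟨hadj, fun hm => hne hm⟩)
        exact ⟨⟨z, H.edge_vert hH.symm⟩, hH, rfl⟩
      · rintro ⟨w, hw, rfl⟩
        exact H.adj_sub hw
    rw [hset, Set.ncard_image_of_injective _ Subtype.val_injective]
    exact hx

private lemma sum_over_verts {V : Type*} [Fintype V] {Gt : SimpleGraph V} (H : Gt.Subgraph)
    (f : V → ℝ) (hf : ∀ x, x ∉ H.verts → f x = 0) :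
    ∑ x : V, f x = ∑ x : ↥H.verts, f x.1 := by
  classical
  rw [← Finset.sum_subtype (Set.toFinset H.verts) (fun x => Set.mem_toFinset) f]
  exact (Finset.sum_subset (Finset.subset_univ _) fun x _ hx =>
    hf x fun hv => hx (Set.mem_toFinset.mpr hv)).symm

private lemma steklov_transfer {V : Type*} [Fintype V] (Gt : SimpleGraph V)
    (hGt : Gt.Connected) (H : Gt.Subgraph) (hG : H.coe.Connected) (hnt : H.verts.Nontrivial)
    (hpi1 : ∀ (v : V) (c : Gt.Walk v v), c.IsCycle → ∀ e ∈ c.edges, e ∈ H.edgeSet)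
    {i : ℕ} {σ : ℝ} (hσnn : 0 ≤ σ)
    (hσ : ∃ E : Submodule ℝ (↥H.verts → ℝ), Module.finrank ℝ E = i ∧
        (∀ u ∈ E, (∀ x ∈ combBoundary H.coe, u x = 0) → u = 0) ∧
        ∀ u ∈ E, energy H.coe (fun _ _ => 1) u ≤
          σ * bInner (combBoundary H.coe) (fun _ => 1) u u) :
    ∃ E : Submodule ℝ (V → ℝ), Module.finrank ℝ E = i ∧
        (∀ u ∈ E, (∀ x ∈ combBoundary Gt, u x = 0) → u = 0) ∧
        ∀ u ∈ E, energy Gt (fun _ _ => 1) u ≤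
          σ * bInner (combBoundary Gt) (fun _ => 1) u u := by
  classical
  obtain ⟨E, hrank, hvan, hray⟩ := hσ
  choose ρ hρ using exists_rho (H := H) hGt hnt
  have hρ_id : ∀ x : ↥H.verts, ρ x.1 = x := fun x =>
    Subtype.ext (unique_vert hG hpi1 (ρ x.1).2 x.2 (hρ x.1).symm)
  have hρ_const : ∀ {a b : V}, (Gt.deleteEdges H.edgeSet).Reachable a b → ρ a = ρ b := by
    intro a b hab
    exact Subtype.ext (unique_vert hG hpi1 (ρ a).2 (ρ b).2 (((hρ a).symm.trans hab).trans (hρ b)))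
  set ext : (↥H.verts → ℝ) →ₗ[ℝ] (V → ℝ) :=
    { toFun := fun u v => u (ρ v)
      map_add' := fun u u' => rfl
      map_smul' := fun c u => rfl } with hextdef
  have hext_apply : ∀ (u : ↥H.verts → ℝ) (v : V), ext u v = u (ρ v) := fun _ _ => rfl
  have hext_id : ∀ (u : ↥H.verts → ℝ) (x : ↥H.verts), ext u x.1 = u x := fun u x => by
    rw [hext_apply, hρ_id]
  have hext_inj : Function.Injective ext := by
    intro u u' h
    funext x
    have hcf := congrFun h x.1
    rwa [hext_id, hext_id] at hcf
  choose β hβ1 hβ2 using exists_boundary_tooth (H := H) hG hpi1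
  have hρβ : ∀ x : ↥H.verts, ρ (β x) = x := fun x => by
    rw [← hρ_const (hβ1 x), hρ_id]
  have hβval : ∀ (u : ↥H.verts → ℝ) (x : ↥H.verts), ext u (β x) = u x := fun u x => by
    rw [hext_apply, hρβ]
  refine ⟨E.map ext, ?_, ?_, ?_⟩
  · rw [← hrank]
    exact (Submodule.equivMapOfInjective ext hext_inj E).finrank_eq.symm
  · rintro u' hu' h0
    obtain ⟨u, huE, rfl⟩ := Submodule.mem_map.mp hu'
    have hu0 : u = 0 := hvan u huE (by
      intro x hx
      rw [← hβval u x]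
      exact h0 (β x) (hβ2 x hx))
    rw [hu0, map_zero]
  · rintro u' hu'
    obtain ⟨u, huE, rfl⟩ := Submodule.mem_map.mp hu'
    have henergy : energy Gt (fun _ _ => 1) (ext u) = energy H.coe (fun _ _ => 1) u := by
      unfold energy
      congr 1
      have step1 : ∀ x y : V,
          (if Gt.Adj x y then (1:ℝ) * (ext u y - ext u x) ^ 2 else 0)
            = (if H.Adj x y then (1:ℝ) * (ext u y - ext u x) ^ 2 else 0) := by
        intro x y
        by_cases hH : H.Adj x y
        · rw [if_pos hH, if_pos (H.adj_sub hH)]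
        · rw [if_neg hH]
          by_cases hGtadj : Gt.Adj x y
          · rw [if_pos hGtadj]
            have hGd : (Gt.deleteEdges H.edgeSet).Adj x y :=
              SimpleGraph.deleteEdges_adj.mpr ⟨hGtadj, fun hm => hH hm⟩
            have hxy : ext u y = ext u x := by
              rw [hext_apply, hext_apply, hρ_const hGd.reachable]
            rw [hxy]
            ring
          · rw [if_neg hGtadj]
      calc ∑ x : V, ∑ y : V, (if Gt.Adj x y then (1:ℝ) * (ext u y - ext u x) ^ 2 else 0)
          = ∑ x : V, ∑ y : V, (if H.Adj x y then (1:ℝ) * (ext u y - ext u x) ^ 2 else 0) :=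
            Finset.sum_congr rfl fun x _ => Finset.sum_congr rfl fun y _ => step1 x y
        _ = ∑ x : ↥H.verts, ∑ y : V,
              (if H.Adj x.1 y then (1:ℝ) * (ext u y - ext u x.1) ^ 2 else 0) := by
            apply sum_over_verts
            intro x hx
            apply Finset.sum_eq_zero
            intro y _
            rw [if_neg fun h => hx (H.edge_vert h)]
        _ = ∑ x : ↥H.verts, ∑ y : ↥H.verts,
              (if H.Adj x.1 y.1 then (1:ℝ) * (ext u y.1 - ext u x.1) ^ 2 else 0) := by
            apply Finset.sum_congr rfl
            intro x _
            apply sum_over_verts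
            intro y hy
            rw [if_neg fun h => hy (H.edge_vert h.symm)]
        _ = ∑ x : ↥H.verts, ∑ y : ↥H.verts,
              (if H.coe.Adj x y then (1:ℝ) * (u y - u x) ^ 2 else 0) := by
            apply Finset.sum_congr rfl
            intro x _
            apply Finset.sum_congr rfl
            intro y _
            rw [hext_id, hext_id]
            rfl
    have hbinner : bInner (combBoundary H.coe) (fun _ => 1) u u ≤
        bInner (combBoundary Gt) (fun _ => 1) (ext u) (ext u) := by
      rw [bInner_eq_sum, bInner_eq_sum]
      have hβinj : Function.Injective β := by
        intro a b hab
        have hra := hρβ a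
        rw [hab, hρβ b] at hra
        exact hra.symm
      have h1 : ∑ x ∈ Finset.univ.filter (fun x => x ∈ combBoundary H.coe), u x * u x
          = ∑ v ∈ (Finset.univ.filter (fun x => x ∈ combBoundary H.coe)).image β,
              ext u v * ext u v := by
        rw [Finset.sum_image (fun a _ b _ h => hβinj h)]
        exact Finset.sum_congr rfl fun x _ => by rw [hβval]
      rw [h1]
      apply Finset.sum_le_sum_of_subset_of_nonneg
      · intro v hv
        rw [Finset.mem_image] at hv
        obtain ⟨x, hx, rfl⟩ := hv
        rw [Finset.mem_filter] at hx ⊢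
        exact ⟨Finset.mem_univ _, hβ2 x hx.2⟩
      · intro v _ _
        exact mul_self_nonneg _
    calc energy Gt (fun _ _ => 1) (ext u) = energy H.coe (fun _ _ => 1) u := henergy
      _ ≤ σ * bInner (combBoundary H.coe) (fun _ => 1) u u := hray u huE
      _ ≤ σ * bInner (combBoundary Gt) (fun _ => 1) (ext u) (ext u) :=
          mul_le_mul_of_nonneg_left hbinner hσnn

end YuYuAuxiliary

/-- **Corollary 1.7.** Monotonicity of Steklov eigenvalues for combinatorial graphs:
if `G` is a connected nontrivial subgraph of the connected finite combinatorial graph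
`G̃` (both with unit weights and boundary the vertices of degree at most one), and the
inclusion of `G` into `G̃` induces an isomorphism of fundamental groups — which, for
connected graphs, is equivalent to every cycle of `G̃` having all of its edges in `G` —
then `σ_i(G̃) ≤ σ_i(G)` for every `i = 1,…,|B(G)|`. -/
theorem steklov_monotonicity_graph
    {V : Type*} [Fintype V] (Gt : SimpleGraph V) (hGt : Gt.Connected)
    (H : Gt.Subgraph) (hG : H.coe.Connected) (hnt : H.verts.Nontrivial)
    (hpi1 : ∀ (v : V) (c : Gt.Walk v v), c.IsCycle → ∀ e ∈ c.edges, e ∈ H.edgeSet) :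
    ∀ i : ℕ, 1 ≤ i → i ≤ (combBoundary H.coe).ncard →
      steklov Gt (combBoundary Gt) (fun _ => 1) (fun _ _ => 1) i ≤
        steklov H.coe (combBoundary H.coe) (fun _ => 1) (fun _ _ => 1) i := by
  intro i hi1 hi2
  unfold steklov
  apply csInf_le_csInf
  · exact ⟨0, fun σ hσ => steklov_mem_nonneg Gt (combBoundary Gt) hi1 hσ⟩
  · obtain ⟨σ, hσ⟩ := steklov_set_nonempty H.coe (combBoundary H.coe) hi2
    exact ⟨σ, hσ⟩
  · intro σ hσ
    exact steklov_transfer Gt hGt H hG hnt hpi1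
      (steklov_mem_nonneg H.coe (combBoundary H.coe) hi1 hσ) hσ
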